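/- Backward induction on a finite extensive-form game with perfect information and no nature moves produces a subgame perfect Nash equilibrium in pure strategies; in particular every such game has a pure strategy subgame perfect Nash equilibrium. -/

import Mathlib

/-- A finite extensive-form game tree: leaves carry payoff vectors, chance
nodes carry edge weights, player nodes carry the acting player's label. -/
inductive GameTree (N : ℕ) : Type
  | leaf (payoff : Fin N → ℝ)
  | chance (n : ℕ) (wt : Fin n → ℝ) (children : Fin n → GameTree N)
  | node (player : Fin N) (n : ℕ) (children : Fin n → GameTree N)

namespace GameTree

variable {N : ℕ}

/-- A behavioral strategy profile: at each node address, a probability for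
each child index. -/
abbrev Profile := List ℕ → ℕ → ℝ

/-- Chance weights are positive and sum to 1; all branching is nonempty. -/
def ValidWeights : GameTree N → Prop
  | leaf _ => True
  | chance n wt cs => 0 < n ∧ (∀ k, 0 < wt k) ∧ (∑ k, wt k) = 1 ∧ ∀ k, (cs k).ValidWeights
  | node _ n cs => 0 < n ∧ ∀ k, (cs k).ValidWeights

/-- The subtree at a given address (list of child indices), if any. -/
def nodeAt : GameTree N → List ℕ → Option (GameTree N)
  | t, [] => some t
  | leaf _, _ :: _ => none
  | chance n _ cs, k :: r => if h : k < n then (cs ⟨k, h⟩).nodeAt r else none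
  | node _ n cs, k :: r => if h : k < n then (cs ⟨k, h⟩).nodeAt r else none

/-- The player acting at a given address, if any. -/
def actor (t : GameTree N) (p : List ℕ) : Option (Fin N) :=
  match t.nodeAt p with
  | some (node i _ _) => some i
  | _ => none

/-- Probability, under profile `σ`, of the path descending from the current
subtree along the given child indices; `p` is the address of the current
subtree in the whole tree. -/
noncomputable def pathProb (σ : Profile) : GameTree N → List ℕ → List ℕ → ℝ
  | _, _, [] => 1
  | leaf _, _, _ :: _ => 0
  | chance n wt cs, p, k :: r =>
      if h : k < n then wt ⟨k, h⟩ * pathProb σ (cs ⟨k, h⟩) (p ++ [k]) r else 0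
  | node _ n cs, p, k :: r =>
      if h : k < n then σ p k * pathProb σ (cs ⟨k, h⟩) (p ++ [k]) r else 0

/-- The list of addresses of all leaves of the tree. -/
def leaves : GameTree N → List (List ℕ)
  | leaf _ => [[]]
  | chance n _ cs => (List.finRange n).flatMap fun k => ((cs k).leaves).map (k.val :: ·)
  | node _ n cs => (List.finRange n).flatMap fun k => ((cs k).leaves).map (k.val :: ·)

/-- Payoff to player `i` at the leaf with the given address (0 if invalid). -/
noncomputable def payoffAt : GameTree N → List ℕ → Fin N → ℝ
  | leaf u, [], i => u i
  | chance n _ cs, k :: r, i => if h : k < n then (cs ⟨k, h⟩).payoffAt r i else 0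
  | node _ n cs, k :: r, i => if h : k < n then (cs ⟨k, h⟩).payoffAt r i else 0
  | _, _, _ => 0

/-- Expected utility of player `i` under profile `σ`:
`u_i(σ) = Σ_λ u_i(λ) Pr[λ|σ]`. -/
noncomputable def util (σ : Profile) (t : GameTree N) (i : Fin N) : ℝ :=
  (t.leaves.map fun l => t.payoffAt l i * pathProb σ t [] l).sum

/-- The profile induced on the subgame rooted at address `ν`. -/
def induced (σ : Profile) (ν : List ℕ) : Profile := fun p => σ (ν ++ p)

/-- The behavioral profile corresponding to a pure strategy profile. -/
def pureProfile (s : List ℕ → ℕ) : Profile := fun p k => if s p = k then 1 else 0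

/-- A pure strategy profile selects an actual outgoing edge at each player node. -/
def ValidPure (t : GameTree N) (s : List ℕ → ℕ) : Prop :=
  ∀ p i m cs, t.nodeAt p = some (node i m cs) → s p < m

/-- A behavioral profile is a genuine probability assignment at each player node. -/
def ValidProfile (t : GameTree N) (σ : Profile) : Prop :=
  ∀ p i m cs, t.nodeAt p = some (node i m cs) →
    (∀ k < m, 0 ≤ σ p k) ∧ (∑ k ∈ Finset.range m, σ p k) = 1

/-- A totally mixed behavioral profile: every edge at every player node gets
strictly positive probability. -/
def TotallyMixed (t : GameTree N) (σ : Profile) : Prop :=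
  ∀ p i m cs, t.nodeAt p = some (node i m cs) →
    (∀ k < m, 0 < σ p k) ∧ (∑ k ∈ Finset.range m, σ p k) = 1

/-- The profile where player `j` deviates from `σ` to the pure strategy `s`. -/
def dev (t : GameTree N) (σ : Profile) (j : Fin N) (s : List ℕ → ℕ) : Profile :=
  fun p k => if t.actor p = some j then pureProfile s p k else σ p k

/-- Nash equilibrium: no player can improve by a unilateral pure deviation. -/
def IsNash (t : GameTree N) (σ : Profile) : Prop :=
  ∀ j : Fin N, ∀ s : List ℕ → ℕ, ValidPure t s → util (dev t σ j s) t j ≤ util σ t j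

/-- Subgame perfection: the induced profile is a Nash equilibrium of every subgame. -/
def IsSubgamePerfect (t : GameTree N) (σ : Profile) : Prop :=
  ∀ ν t', t.nodeAt ν = some t' → IsNash t' (induced σ ν)

/-- Every player is indifferent among all of their pure strategies. -/
def Indifferent (t : GameTree N) (σ : Profile) : Prop :=
  ∀ j : Fin N, ∀ s₁ s₂ : List ℕ → ℕ, ValidPure t s₁ → ValidPure t s₂ →
    util (dev t σ j s₁) t j = util (dev t σ j s₂) t j

/-- Player `j` is indifferent among all of `j`'s pure strategies. -/
def IndifferentFor (t : GameTree N) (σ : Profile) (j : Fin N) : Prop :=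
  ∀ s₁ s₂ : List ℕ → ℕ, ValidPure t s₁ → ValidPure t s₂ →
    util (dev t σ j s₁) t j = util (dev t σ j s₂) t j

end GameTree

namespace GameTree

variable {N : ℕ}

/-- A game tree with no chance (nature) nodes. -/
def NoChance : GameTree N → Prop
  | leaf _ => True
  | chance _ _ _ => False
  | node _ n cs => ∀ k, NoChance (cs k)

/-- Backward-induction value vector of a tree: at a player node, the value vector
of a child maximizing the acting player's value. -/
noncomputable def biVal : GameTree N → Fin N → ℝ
  | leaf u => u
  | chance n wt cs => fun i' => ∑ k, wt k * biVal (cs k) i'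
  | node i n cs =>
      if h : 0 < n then
        biVal (cs (((List.finRange n).argmax fun k => biVal (cs k) i).getD ⟨0, h⟩))
      else fun _ => 0

/-- The pure strategy profile produced by backward induction: at each player node,
choose a child maximizing the acting player's backward-induction value. -/
noncomputable def biStrat (t : GameTree N) (p : List ℕ) : ℕ :=
  match t.nodeAt p with
  | some (node i n cs) =>
      ((((List.finRange n).argmax fun k => biVal (cs k) i).map Fin.val).getD 0)
  | _ => 0

end GameTree


namespace GameTree

variable {N : ℕ}

lemma sum_flatMap' {α β : Type*} [AddCommMonoid β] (l : List α) (g : α → List β) :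
    (l.flatMap g).sum = (l.map fun a => (g a).sum).sum := by
  induction l with
  | nil => simp
  | cons a l ih => simp [List.flatMap_cons, ih]

lemma nodeAt_append (t : GameTree N) (p q : List ℕ) (t' : GameTree N)
    (h : t.nodeAt p = some t') : t.nodeAt (p ++ q) = t'.nodeAt q := by
  induction p generalizing t with
  | nil => simp only [nodeAt, Option.some.injEq] at h; subst h; rfl
  | cons k p ih =>
    cases t with
    | leaf u => simp [nodeAt] at h
    | chance n wt cs =>
      rw [List.cons_append]
      by_cases hk : k < n
      · simp only [nodeAt, dif_pos hk] at h ⊢; exact ih _ h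
      · simp [nodeAt, dif_neg hk] at h
    | node i n cs =>
      rw [List.cons_append]
      by_cases hk : k < n
      · simp only [nodeAt, dif_pos hk] at h ⊢; exact ih _ h
      · simp [nodeAt, dif_neg hk] at h

lemma validWeights_nodeAt {t t' : GameTree N} {p : List ℕ} (hw : t.ValidWeights)
    (h : t.nodeAt p = some t') : t'.ValidWeights := by
  induction p generalizing t with
  | nil => simp only [nodeAt, Option.some.injEq] at h; subst h; exact hw
  | cons k p ih =>
    cases t with
    | leaf u => simp [nodeAt] at h
    | chance n wt cs =>
      by_cases hk : k < n
      · simp only [nodeAt, dif_pos hk] at h; exact ih (hw.2.2.2 _) h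
      · simp [nodeAt, dif_neg hk] at h
    | node i n cs =>
      by_cases hk : k < n
      · simp only [nodeAt, dif_pos hk] at h; exact ih (hw.2 _) h
      · simp [nodeAt, dif_neg hk] at h

lemma noChance_nodeAt {t t' : GameTree N} {p : List ℕ} (hnc : NoChance t)
    (h : t.nodeAt p = some t') : NoChance t' := by
  induction p generalizing t with
  | nil => simp only [nodeAt, Option.some.injEq] at h; subst h; exact hnc
  | cons k p ih =>
    cases t with
    | leaf u => simp [nodeAt] at h
    | chance n wt cs => exact hnc.elim
    | node i n cs =>
      by_cases hk : k < n
      · simp only [nodeAt, dif_pos hk] at h; exact ih (hnc _) h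
      · simp [nodeAt, dif_neg hk] at h

lemma validPure_nodeAt {t t' : GameTree N} {p : List ℕ} {s : List ℕ → ℕ}
    (hs : ValidPure t s) (h : t.nodeAt p = some t') :
    ValidPure t' (fun q => s (p ++ q)) := by
  intro q i m cs hq
  exact hs (p ++ q) i m cs (by rw [nodeAt_append t p q t' h]; exact hq)

lemma actor_shift {t t' : GameTree N} {p : List ℕ} (h : t.nodeAt p = some t')
    (q : List ℕ) : t.actor (p ++ q) = t'.actor q := by
  unfold actor
  rw [nodeAt_append t p q t' h]

lemma biStrat_shift {t t' : GameTree N} {p : List ℕ} (h : t.nodeAt p = some t')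
    (q : List ℕ) : biStrat t (p ++ q) = biStrat t' q := by
  unfold biStrat
  rw [nodeAt_append t p q t' h]

lemma pathProb_shift' (t : GameTree N) : ∀ (σ : Profile) (p l : List ℕ),
    pathProb σ t p l = pathProb (fun q => σ (p ++ q)) t [] l := by
  induction t with
  | leaf u => intro σ p l; cases l <;> simp [pathProb]
  | chance n wt cs ih =>
    intro σ p l
    cases l with
    | nil => simp [pathProb]
    | cons k r =>
      simp only [pathProb]
      split_ifs with hk
      · rw [ih _ σ (p ++ [k]) r, ih _ (fun q => σ (p ++ q)) ([] ++ [k]) r]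
        simp only [List.append_assoc, List.singleton_append, List.nil_append,
          List.cons_append]
      · rfl
  | node i n cs ih =>
    intro σ p l
    cases l with
    | nil => simp [pathProb]
    | cons k r =>
      simp only [pathProb]
      split_ifs with hk
      · rw [ih _ σ (p ++ [k]) r, ih _ (fun q => σ (p ++ q)) ([] ++ [k]) r]
        simp only [List.append_assoc, List.singleton_append, List.nil_append,
          List.cons_append, List.append_nil]
      · rfl

lemma pathProb_shift (σ : Profile) (t : GameTree N) (p l : List ℕ) :
    pathProb σ t p l = pathProb (fun q => σ (p ++ q)) t [] l :=
  pathProb_shift' t σ p l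

lemma util_leaf (σ : Profile) (u : Fin N → ℝ) (j : Fin N) :
    util σ (leaf u) j = u j := by
  simp [util, leaves, payoffAt, pathProb]

lemma util_node (σ : Profile) (i : Fin N) (n : ℕ) (cs : Fin n → GameTree N)
    (j : Fin N) :
    util σ (node i n cs) j
      = ∑ k : Fin n, σ [] k.val * util (induced σ [k.val]) (cs k) j := by
  rw [util, Fin.sum_univ_def, leaves, List.map_flatMap, sum_flatMap']
  congr 1
  apply List.map_congr_left
  intro k _
  simp only [List.map_map]
  rw [util, ← List.sum_map_mul_left]
  apply congrArg List.sum
  apply List.map_congr_left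
  intro r _
  simp only [Function.comp_apply, payoffAt, pathProb, dif_pos k.isLt, Fin.eta]
  rw [pathProb_shift σ (cs k) ([] ++ [k.val]) r]
  simp only [List.nil_append]
  have : (fun q => σ ([k.val] ++ q)) = induced σ [k.val] := rfl
  rw [this]
  ring

lemma util_pure_node (s : List ℕ → ℕ) {i : Fin N} {n : ℕ} {cs : Fin n → GameTree N}
    {j : Fin N} {m : ℕ} (hm : m < n) (hsm : s [] = m) :
    util (pureProfile s) (node i n cs) j
      = util (pureProfile fun p => s (m :: p)) (cs ⟨m, hm⟩) j := by
  rw [util_node]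
  rw [Finset.sum_eq_single (⟨m, hm⟩ : Fin n)]
  · have h1 : pureProfile s [] (m : ℕ) = 1 := by simp [pureProfile, hsm]
    have h2 : induced (pureProfile s) [m] = pureProfile fun p => s (m :: p) := rfl
    rw [h1, h2, one_mul]
  · intro b _ hb
    have : pureProfile s [] b.val = 0 := by
      simp only [pureProfile, hsm, ite_eq_right_iff]
      intro he
      exact absurd (Fin.ext he.symm) hb
    rw [this, zero_mul]
  · intro h; exact absurd (Finset.mem_univ _) h

lemma main_lemma (t : GameTree N) (hnc : NoChance t) (hw : ValidWeights t) :
    (∀ j, util (pureProfile (biStrat t)) t j = biVal t j) ∧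
    ∀ (j : Fin N) (s : List ℕ → ℕ), ValidPure t s →
      util (pureProfile fun p => if t.actor p = some j then s p else biStrat t p) t j
        ≤ biVal t j := by
  induction t with
  | leaf u =>
    constructor
    · intro j; rw [util_leaf]; rfl
    · intro j s _; rw [util_leaf]; exact le_refl _
  | chance n wt cs ih => exact hnc.elim
  | node i n cs ih =>
    obtain ⟨hn, hwc⟩ := hw
    have hnc' : ∀ k, NoChance (cs k) := hnc
    obtain ⟨kmax, hk⟩ : ∃ km, ((List.finRange n).argmax fun k => biVal (cs k) i) = some km := by
      rcases h' : (List.finRange n).argmax fun k => biVal (cs k) i with _ | km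
      · rw [List.argmax_eq_none, List.finRange_eq_nil_iff] at h'; omega
      · exact ⟨km, rfl⟩
    have hbiVal : biVal (node i n cs) = biVal (cs kmax) := by
      simp only [biVal, dif_pos hn, hk, Option.getD_some]
    have hroot : biStrat (node i n cs) [] = kmax.val := by
      unfold biStrat
      simp only [nodeAt, hk, Option.map_some, Option.getD_some]
    have hnode : (node i n cs).nodeAt [kmax.val] = some (cs kmax) := by
      simp [nodeAt, kmax.isLt]
    have hcons : ∀ (m : ℕ) (hm : m < n),
        (node i n cs).nodeAt [m] = some (cs ⟨m, hm⟩) := by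
      intro m hm; simp [nodeAt, hm]
    constructor
    · intro j
      rw [util_pure_node _ kmax.isLt hroot]
      have hshift : (fun p => biStrat (node i n cs) (kmax.val :: p))
          = biStrat (cs kmax) := by
        funext p
        exact biStrat_shift hnode p
      simp only [Fin.eta]
      rw [hshift, (ih kmax (hnc' kmax) (hwc kmax)).1 j, hbiVal]
    · intro j s hs
      have ha : (node i n cs).actor [] = some i := rfl
      by_cases hij : i = j
      · subst hij
        have hm : s [] < n := hs [] i n cs rfl
        have hsd : (fun p => if (node i n cs).actor p = some i then s p
            else biStrat (node i n cs) p) [] = s [] := by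
          simp [ha]
        rw [util_pure_node _ hm hsd]
        have hshift : (fun p => if (node i n cs).actor (s [] :: p) = some i
              then s (s [] :: p) else biStrat (node i n cs) (s [] :: p))
            = fun p => if (cs ⟨s [], hm⟩).actor p = some i
              then (fun q => s (s [] :: q)) p else biStrat (cs ⟨s [], hm⟩) p := by
          funext p
          rw [show (s [] :: p) = [s []] ++ p from rfl,
            actor_shift (hcons _ hm) p, biStrat_shift (hcons _ hm) p]
          rfl
        rw [hshift]
        have hvp : ValidPure (cs ⟨s [], hm⟩) (fun q => s (s [] :: q)) :=
          validPure_nodeAt hs (hcons _ hm)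
        have h1 := (ih ⟨s [], hm⟩ (hnc' _) (hwc _)).2 i _ hvp
        have h2 : biVal (cs ⟨s [], hm⟩) i ≤ biVal (cs kmax) i :=
          List.le_of_mem_argmax (List.mem_finRange _) hk
        rw [hbiVal]
        exact le_trans h1 h2
      · have hsd : (fun p => if (node i n cs).actor p = some j then s p
            else biStrat (node i n cs) p) [] = kmax.val := by
          simp only [ha, Option.some.injEq]
          rw [if_neg hij, hroot]
        rw [util_pure_node _ kmax.isLt hsd]
        have hshift : (fun p => if (node i n cs).actor (kmax.val :: p) = some j
              then s (kmax.val :: p) else biStrat (node i n cs) (kmax.val :: p))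
            = fun p => if (cs kmax).actor p = some j
              then (fun q => s (kmax.val :: q)) p else biStrat (cs kmax) p := by
          funext p
          rw [show (kmax.val :: p) = [kmax.val] ++ p from rfl,
            actor_shift hnode p, biStrat_shift hnode p]
          rfl
        simp only [Fin.eta]
        rw [hshift]
        have hvp : ValidPure (cs kmax) (fun q => s (kmax.val :: q)) :=
          validPure_nodeAt hs hnode
        rw [hbiVal]
        exact (ih kmax (hnc' kmax) (hwc kmax)).2 j _ hvp

lemma biStrat_valid (t : GameTree N) (hw : ValidWeights t) :
    ValidPure t (biStrat t) := by
  intro p i m cs h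
  have hw' := validWeights_nodeAt hw h
  obtain ⟨hm, -⟩ := hw'
  obtain ⟨km, hkm⟩ : ∃ k, ((List.finRange m).argmax fun k => biVal (cs k) i) = some k := by
    rcases h' : (List.finRange m).argmax fun k => biVal (cs k) i with _ | km
    · rw [List.argmax_eq_none, List.finRange_eq_nil_iff] at h'; omega
    · exact ⟨km, rfl⟩
  unfold biStrat
  rw [h]
  simp only [hkm, Option.map_some, Option.getD_some]
  exact km.isLt

lemma biNash (t : GameTree N) (hnc : NoChance t) (hw : ValidWeights t) :
    IsNash t (pureProfile (biStrat t)) := by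
  intro j s hs
  have hmain := main_lemma t hnc hw
  have hdev : dev t (pureProfile (biStrat t)) j s
      = pureProfile fun p => if t.actor p = some j then s p else biStrat t p := by
    funext p k
    by_cases h : t.actor p = some j <;> simp [dev, pureProfile, h]
  rw [hdev, hmain.1 j]
  exact hmain.2 j s hs

lemma biSPE (t : GameTree N) (hnc : NoChance t) (hw : ValidWeights t) :
    IsSubgamePerfect t (pureProfile (biStrat t)) := by
  intro ν t' hν
  have hind : induced (pureProfile (biStrat t)) ν = pureProfile (biStrat t') := by
    funext p k
    show (if biStrat t (ν ++ p) = k then (1:ℝ) else 0) = _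
    rw [biStrat_shift hν p]
    rfl
  rw [hind]
  exact biNash t' (noChance_nodeAt hnc hν) (validWeights_nodeAt hw hν)

end GameTree

open GameTree in
/-- backward induction on a finite perfect-information game without
nature moves produces a pure subgame perfect Nash equilibrium; in particular,
every such game has one. -/
theorem backward_induction_SPE {N : ℕ} (t : GameTree N) (hw : t.ValidWeights)
    (hnc : NoChance t) :
    (ValidPure t (biStrat t) ∧ IsSubgamePerfect t (pureProfile (biStrat t))) ∧
    ∃ s : List ℕ → ℕ, ValidPure t s ∧ IsSubgamePerfect t (pureProfile s) := by
  refine ⟨⟨biStrat_valid t hw, biSPE t hnc hw⟩, biStrat t, biStrat_valid t hw, biSPE t hnc hw⟩
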